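/- Let G = {G^L | G^R} be a short dicotic game. If A and B are both left options of G with A ≼ B (mod D⁻), then G = {G^L \ {A} | G^R} (mod D⁻), i.e., removing the dominated left option A does not change the equivalence class of G modulo D⁻. -/

import Mathlib

universe u

namespace SetTheory

/-- Restored from Mathlib (Dec 2024): pre-games. -/
inductive PGame : Type (u + 1)
  | mk : ∀ α β : Type u, (α → PGame) → (β → PGame) → PGame

namespace PGame

def LeftMoves : PGame → Type u
  | mk l _ _ _ => l

def RightMoves : PGame → Type u
  | mk _ r _ _ => r

def moveLeft : ∀ g : PGame, LeftMoves g → PGame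
  | mk _l _ L _ => L

def moveRight : ∀ g : PGame, RightMoves g → PGame
  | mk _ _r _ R => R

inductive IsOption : PGame → PGame → Prop
  | moveLeft {x : PGame} (i : x.LeftMoves) : IsOption (x.moveLeft i) x
  | moveRight {x : PGame} (i : x.RightMoves) : IsOption (x.moveRight i) x

def Identical : PGame.{u} → PGame.{u} → Prop
  | mk _ _ xL xR, mk _ _ yL yR =>
    Relator.BiTotal (fun i j ↦ Identical (xL i) (yL j)) ∧
      Relator.BiTotal (fun i j ↦ Identical (xR i) (yR j))

noncomputable def birthday : PGame.{u} → Ordinal.{u}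
  | ⟨_, _, xL, xR⟩ =>
    max (Ordinal.lsub.{u, u} fun i => birthday (xL i))
      (Ordinal.lsub.{u, u} fun i => birthday (xR i))

theorem birthday_moveLeft_lt {x : PGame} (i : x.LeftMoves) :
    (x.moveLeft i).birthday < x.birthday := by
  cases x; rw [birthday]; exact lt_max_of_lt_left (Ordinal.lt_lsub _ i)

theorem birthday_moveRight_lt {x : PGame} (i : x.RightMoves) :
    (x.moveRight i).birthday < x.birthday := by
  cases x; rw [birthday]; exact lt_max_of_lt_right (Ordinal.lt_lsub _ i)

instance : Zero PGame :=
  ⟨⟨PEmpty, PEmpty, PEmpty.elim, PEmpty.elim⟩⟩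

def star : PGame.{u} :=
  ⟨PUnit, PUnit, fun _ => 0, fun _ => 0⟩

def neg : PGame → PGame
  | ⟨l, r, L, R⟩ => ⟨r, l, fun i => neg (R i), fun i => neg (L i)⟩

instance : Neg PGame :=
  ⟨neg⟩

noncomputable instance : Add PGame.{u} :=
  ⟨fun x y => by
    induction x generalizing y with | mk xl xr _ _ IHxl IHxr => _
    induction y with | mk yl yr yL yR IHyl IHyr => _
    have y := mk yl yr yL yR
    refine ⟨xl ⊕ yl, xr ⊕ yr, Sum.rec ?_ ?_, Sum.rec ?_ ?_⟩
    · exact fun i => IHxl i y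
    · exact IHyl
    · exact fun i => IHxr i y
    · exact IHyr⟩

end PGame

end SetTheory

open SetTheory PGame

namespace MisereDicot

def Follower (G' G : PGame) : Prop := Relation.ReflTransGen PGame.IsOption G' G

def IsShort (G : PGame) : Prop :=
  ∀ G', Follower G' G → Finite G'.LeftMoves ∧ Finite G'.RightMoves

def Dicot (G : PGame) : Prop :=
  ∀ G', Follower G' G → (IsEmpty G'.LeftMoves ↔ IsEmpty G'.RightMoves)

mutual
def LeftWinsFirst (G : PGame) : Prop :=
  IsEmpty G.LeftMoves ∨ ∃ i, ¬ RightWinsFirst (G.moveLeft i)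
termination_by G.birthday
decreasing_by exact PGame.birthday_moveLeft_lt i

def RightWinsFirst (G : PGame) : Prop :=
  IsEmpty G.RightMoves ∨ ∃ j, ¬ LeftWinsFirst (G.moveRight j)
termination_by G.birthday
decreasing_by exact PGame.birthday_moveRight_lt j
end

inductive MOutcome : Type
  | L | N | P | R
deriving DecidableEq

instance : LE MOutcome := ⟨fun a b => a = b ∨ a = .R ∨ b = .L⟩

noncomputable def outcome (G : PGame) : MOutcome := by
  classical
  exact if LeftWinsFirst G then (if RightWinsFirst G then .N else .L)
        else (if RightWinsFirst G then .R else .P)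

def Dge (G H : PGame) : Prop :=
  ∀ X : PGame, IsShort X → Dicot X → outcome (H + X) ≤ outcome (G + X)

def Deq (G H : PGame) : Prop :=
  ∀ X : PGame, IsShort X → Dicot X → outcome (G + X) = outcome (H + X)

def Dgt (G H : PGame) : Prop := Dge G H ∧ ¬ Deq G H

def DInvertible (G : PGame) : Prop :=
  ∃ H : PGame, IsShort H ∧ Dicot H ∧ Deq (G + H) 0

/-- The left option `G^L_i` is reversible through its right option `(G^L_i)^R_j ≼ G`. -/
def LeftReversibleAt (G : PGame) (i : G.LeftMoves) (j : (G.moveLeft i).RightMoves) : Prop :=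
  Dge G ((G.moveLeft i).moveRight j)

def RightReversibleAt (G : PGame) (j : G.RightMoves) (i : (G.moveRight j).LeftMoves) : Prop :=
  Dge ((G.moveRight j).moveLeft i) G

/-- `G` has a dominated left option (removable by the Domination theorem). -/
def LeftDominated (G : PGame) : Prop :=
  ∃ i i' : G.LeftMoves, ¬ (G.moveLeft i).Identical (G.moveLeft i') ∧
    Dge (G.moveLeft i') (G.moveLeft i)

def RightDominated (G : PGame) : Prop :=
  ∃ j j' : G.RightMoves, ¬ (G.moveRight j).Identical (G.moveRight j') ∧
    Dge (G.moveRight j) (G.moveRight j')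

/-- `G` has a non-atomic reversible left option (bypassable). -/
def LeftNonAtomicReversible (G : PGame) : Prop :=
  ∃ i j, LeftReversibleAt G i j ∧ Nonempty ((G.moveLeft i).moveRight j).LeftMoves

def RightNonAtomicReversible (G : PGame) : Prop :=
  ∃ j i, RightReversibleAt G j i ∧ Nonempty ((G.moveRight j).moveLeft i).RightMoves

/-- `G` has an atomic-reversible left option to which the atomic-reversibility
replacement applies nontrivially (i.e. changing the set of options): either some
other left option is a winning first move for Left (so the option is removable),
or the option is not already `*`. -/
def LeftAtomicReducible (G : PGame) : Prop :=
  ∃ i j, LeftReversibleAt G i j ∧ IsEmpty ((G.moveLeft i).moveRight j).LeftMoves ∧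
    ((∃ i', ¬ (G.moveLeft i').Identical (G.moveLeft i) ∧ ¬ RightWinsFirst (G.moveLeft i')) ∨
      ¬ (G.moveLeft i).Identical star)

def RightAtomicReducible (G : PGame) : Prop :=
  ∃ j i, RightReversibleAt G j i ∧ IsEmpty ((G.moveRight j).moveLeft i).RightMoves ∧
    ((∃ j', ¬ (G.moveRight j').Identical (G.moveRight j) ∧ ¬ LeftWinsFirst (G.moveRight j')) ∨
      ¬ (G.moveRight j).Identical star)

/-- The Substitution theorem applies to `G`: `G = {A | C}` with `A` an
atomic-reversible left option and `C` an atomic-reversible right option. -/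
def SubstitutionReducible (G : PGame) : Prop :=
  (∀ i i' : G.LeftMoves, (G.moveLeft i).Identical (G.moveLeft i')) ∧
  (∀ j j' : G.RightMoves, (G.moveRight j).Identical (G.moveRight j')) ∧
  (∃ i j, LeftReversibleAt G i j ∧ IsEmpty ((G.moveLeft i).moveRight j).LeftMoves) ∧
  (∃ j i, RightReversibleAt G j i ∧ IsEmpty ((G.moveRight j).moveLeft i).RightMoves)

/-- `G` is in canonical form: no follower admits any of the misère-dicot
simplifications (domination, non-atomic reversibility, atomic reversibility,
substitution) producing an equivalent game with a different set of options. -/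
def CanonicalForm (G : PGame) : Prop :=
  ∀ G', Follower G' G →
    ¬ (LeftDominated G' ∨ RightDominated G' ∨
       LeftNonAtomicReversible G' ∨ RightNonAtomicReversible G' ∨
       LeftAtomicReducible G' ∨ RightAtomicReducible G' ∨
       SubstitutionReducible G')

/-- The game `*2 = {0, * | 0, *}`. -/
def star2 : PGame :=
  PGame.mk Bool Bool (fun b => cond b star 0) (fun b => cond b star 0)

open Classical in
/-- The adjoint `G°` of `G`. -/
noncomputable def adjoint : PGame → PGame
  | PGame.mk l r L R =>
    if IsEmpty l ∧ IsEmpty r then star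
    else if IsEmpty l then PGame.mk r PUnit (fun j => adjoint (R j)) (fun _ => 0)
    else if IsEmpty r then PGame.mk PUnit l (fun _ => 0) (fun i => adjoint (L i))
    else PGame.mk r l (fun j => adjoint (R j)) (fun i => adjoint (L i))

/-- A universe of short games: a class closed under taking options, disjunctive
sums and conjugates. -/
structure GameUniverse where
  mem : PGame → Prop
  short_mem : ∀ G, mem G → IsShort G
  isOption_mem : ∀ G G', mem G → PGame.IsOption G' G → mem G'
  add_mem : ∀ G H, mem G → mem H → mem (G + H)
  neg_mem : ∀ G, mem G → mem (-G)

/-- `G ≽ H` modulo the universe `U`. -/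
def UGe (U : GameUniverse) (G H : PGame) : Prop :=
  ∀ X : PGame, U.mem X → outcome (H + X) ≤ outcome (G + X)

/-- `G = H` modulo the universe `U`. -/
def UEq (U : GameUniverse) (G H : PGame) : Prop :=
  ∀ X : PGame, U.mem X → outcome (G + X) = outcome (H + X)

/-- `G ≻ H` modulo the universe `U`. -/
def UGt (U : GameUniverse) (G H : PGame) : Prop := UGe U G H ∧ ¬ UEq U G H

/-- `J` is invertible in the universe `U`. -/
def UInvertible (U : GameUniverse) (J : PGame) : Prop :=
  ∃ J' : PGame, U.mem J' ∧ UEq U (J + J') 0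


/-!
Compare `G + X` with `G' + X`, where `G'` drops the left options identical to `A`, by induction
on the dicot `X`. Right's moves and Left's moves in `X` correspond exactly and, by induction,
lead to positions with the same winner. Left's only extra moves in `G + X` are to `A + X` (up to
identity); if one of them wins, Right loses moving first in `A + X`, hence also in `B + X` because
`A ≼ B`, so Left wins by moving to `B + X` instead. Since `B` is kept, `G'` still has a left option.
-/

theorem _root_.Relator.BiTotal.isEmpty_iff {α β : Sort*} {R : α → β → Prop}
    (h : Relator.BiTotal R) : IsEmpty α ↔ IsEmpty β :=
  ⟨fun _ => ⟨fun b => (h.2 b).elim fun a _ => isEmptyElim a⟩,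
    fun _ => ⟨fun a => (h.1 a).elim fun b _ => isEmptyElim b⟩⟩

theorem _root_.SetTheory.PGame.identical_iff {x y : PGame} : x.Identical y ↔
    Relator.BiTotal (fun i j => (x.moveLeft i).Identical (y.moveLeft j)) ∧
      Relator.BiTotal (fun i j => (x.moveRight i).Identical (y.moveRight j)) := by
  cases x; cases y; exact Iff.rfl

theorem _root_.SetTheory.PGame.Identical.add_right {x y : PGame} (z : PGame)
    (h : x.Identical y) : (x + z).Identical (y + z) := by
  induction z generalizing x y with | mk zl zr zL zR ihzL ihzR =>
  induction x generalizing y with | mk xl xr xL xR ihxL ihxR =>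
  cases y with | mk yl yr yL yR =>
  obtain ⟨⟨hl₁, hl₂⟩, hr₁, hr₂⟩ := id h
  refine ⟨⟨?_, ?_⟩, ?_, ?_⟩
  · rintro (i | k)
    · obtain ⟨j, hj⟩ := hl₁ i
      exact ⟨.inl j, ihxL i hj⟩
    · exact ⟨.inr k, ihzL k h⟩
  · rintro (j | k)
    · obtain ⟨i, hi⟩ := hl₂ j
      exact ⟨.inl i, ihxL i hi⟩
    · exact ⟨.inr k, ihzL k h⟩
  · rintro (i | k)
    · obtain ⟨j, hj⟩ := hr₁ i
      exact ⟨.inl j, ihxR i hj⟩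
    · exact ⟨.inr k, ihzR k h⟩
  · rintro (j | k)
    · obtain ⟨i, hi⟩ := hr₂ j
      exact ⟨.inl i, ihxR i hi⟩
    · exact ⟨.inr k, ihzR k h⟩

theorem leftWinsFirst_iff (G : PGame) :
    LeftWinsFirst G ↔ IsEmpty G.LeftMoves ∨ ∃ i, ¬ RightWinsFirst (G.moveLeft i) := by
  rw [LeftWinsFirst]

theorem rightWinsFirst_iff (G : PGame) :
    RightWinsFirst G ↔ IsEmpty G.RightMoves ∨ ∃ j, ¬ LeftWinsFirst (G.moveRight j) := by
  rw [RightWinsFirst]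

theorem winsFirst_congr_of_identical {x y : PGame} (h : x.Identical y) :
    (LeftWinsFirst x ↔ LeftWinsFirst y) ∧ (RightWinsFirst x ↔ RightWinsFirst y) := by
  induction x generalizing y with | mk xl xr xL xR ihL ihR =>
  obtain ⟨hl, hr⟩ := identical_iff.mp h
  rw [leftWinsFirst_iff, leftWinsFirst_iff, rightWinsFirst_iff, rightWinsFirst_iff]
  exact ⟨or_congr hl.isEmpty_iff (hl.rel_exists fun i _ hij => not_congr (ihL i hij).2),
    or_congr hr.isEmpty_iff (hr.rel_exists fun j _ hij => not_congr (ihR j hij).1)⟩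

theorem outcome_congr {G H : PGame} (hl : LeftWinsFirst G ↔ LeftWinsFirst H)
    (hr : RightWinsFirst G ↔ RightWinsFirst H) : outcome G = outcome H := by
  unfold outcome
  split_ifs <;> tauto

theorem outcome_add_eq_of_identical {x y : PGame} (z : PGame) (h : x.Identical y) :
    outcome (x + z) = outcome (y + z) :=
  outcome_congr (winsFirst_congr_of_identical (h.add_right z)).1
    (winsFirst_congr_of_identical (h.add_right z)).2

theorem not_rightWinsFirst_of_outcome_le {G H : PGame} (h : outcome G ≤ outcome H)
    (hG : ¬ RightWinsFirst G) : ¬ RightWinsFirst H := by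
  intro hH
  rcases h with h | h | h <;> revert h <;> unfold outcome <;> split_ifs <;> simp_all

theorem leftWinsFirst_add_iff (G H : PGame) :
    LeftWinsFirst (G + H) ↔ (IsEmpty G.LeftMoves ∧ IsEmpty H.LeftMoves) ∨
      (∃ i, ¬ RightWinsFirst (G.moveLeft i + H)) ∨ ∃ k, ¬ RightWinsFirst (G + H.moveLeft k) := by
  cases G; cases H
  rw [leftWinsFirst_iff]
  exact or_congr isEmpty_sum Sum.exists

theorem rightWinsFirst_add_iff (G H : PGame) :
    RightWinsFirst (G + H) ↔ (IsEmpty G.RightMoves ∧ IsEmpty H.RightMoves) ∨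
      (∃ j, ¬ LeftWinsFirst (G.moveRight j + H)) ∨ ∃ k, ¬ LeftWinsFirst (G + H.moveRight k) := by
  cases G; cases H
  rw [rightWinsFirst_iff]
  exact or_congr isEmpty_sum Sum.exists

theorem IsShort.of_isOption {G G' : PGame} (hG : IsShort G) (h : G'.IsOption G) : IsShort G' :=
  fun H hH => hG H (hH.tail h)

theorem Dicot.of_isOption {G G' : PGame} (hG : Dicot G) (h : G'.IsOption G) : Dicot G' :=
  fun H hH => hG H (hH.tail h)

theorem exists_subtype_iff_of_dominated {α : Sort*} {p q : α → Prop}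
    (h : ∀ a, ¬ p a → q a → ∃ b, p b ∧ q b) : (∃ a : Subtype p, q a) ↔ ∃ a, q a := by
  refine ⟨fun ⟨a, ha⟩ => ⟨a, ha⟩, fun ⟨a, ha⟩ => ?_⟩
  by_cases hp : p a
  · exact ⟨⟨a, hp⟩, ha⟩
  · obtain ⟨b, hpb, hqb⟩ := h a hp ha
    exact ⟨⟨b, hpb⟩, hqb⟩

def _root_.SetTheory.PGame.restrictLeft (G : PGame) (p : G.LeftMoves → Prop) : PGame :=
  PGame.mk {i // p i} G.RightMoves (fun i => G.moveLeft i.1) G.moveRight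

section RestrictLeft

variable {G : PGame} {p : G.LeftMoves → Prop}

theorem winsFirst_restrictLeft_add_iff
    (hdom : ∀ i, ¬ p i → ∃ j, p j ∧ Dge (G.moveLeft j) (G.moveLeft i))
    (X : PGame) (hXs : IsShort X) (hXd : Dicot X) :
    (LeftWinsFirst (G.restrictLeft p + X) ↔ LeftWinsFirst (G + X)) ∧
      (RightWinsFirst (G.restrictLeft p + X) ↔ RightWinsFirst (G + X)) := by
  induction X with | mk yl yr yL yR ihL ihR =>
  have hL k := ihL k (hXs.of_isOption (.moveLeft (x := .mk yl yr yL yR) k))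
    (hXd.of_isOption (.moveLeft (x := .mk yl yr yL yR) k))
  have hR k := ihR k (hXs.of_isOption (.moveRight (x := .mk yl yr yL yR) k))
    (hXd.of_isOption (.moveRight (x := .mk yl yr yL yR) k))
  have hempty : IsEmpty {i // p i} ↔ IsEmpty G.LeftMoves := by
    rw [← not_nonempty_iff, ← not_nonempty_iff, ← exists_true_iff_nonempty,
      ← exists_true_iff_nonempty]
    exact not_congr <| exists_subtype_iff_of_dominated fun i hi _ =>
      (hdom i hi).imp fun _ hj => ⟨hj.1, trivial⟩
  have hmove : (∃ i : {i // p i}, ¬ RightWinsFirst (G.moveLeft i + PGame.mk yl yr yL yR)) ↔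
      ∃ i, ¬ RightWinsFirst (G.moveLeft i + PGame.mk yl yr yL yR) :=
    exists_subtype_iff_of_dominated fun i hi hwin => (hdom i hi).imp fun _ ⟨hj, hge⟩ =>
      ⟨hj, not_rightWinsFirst_of_outcome_le (hge _ hXs hXd) hwin⟩
  rw [leftWinsFirst_add_iff, leftWinsFirst_add_iff, rightWinsFirst_add_iff,
    rightWinsFirst_add_iff]
  exact ⟨or_congr (and_congr_left' hempty)
      (or_congr hmove (exists_congr fun k => not_congr (hL k).2)),
    or_congr Iff.rfl (or_congr Iff.rfl (exists_congr fun k => not_congr (hR k).1))⟩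

theorem deq_restrictLeft_of_dominated
    (hdom : ∀ i, ¬ p i → ∃ j, p j ∧ Dge (G.moveLeft j) (G.moveLeft i)) :
    Deq G (G.restrictLeft p) := fun X hXs hXd =>
  have h := winsFirst_restrictLeft_add_iff hdom X hXs hXd
  (outcome_congr h.1 h.2).symm

end RestrictLeft

/-- Domination: removing a dominated left option `A = xL iA`
(dominated by `B = xL iB`, a distinct element of the set of left options) does not
change the equivalence class of `G` modulo `D⁻`. -/
theorem stmt9 (xl xr : Type) (xL : xl → PGame) (xR : xr → PGame)
    (hs : IsShort (PGame.mk xl xr xL xR)) (hd : Dicot (PGame.mk xl xr xL xR))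
    (iA iB : xl) (hne : ¬ (xL iB).Identical (xL iA)) (hAB : Dge (xL iB) (xL iA)) :
    Deq (PGame.mk xl xr xL xR)
      (PGame.mk {i : xl // ¬ (xL i).Identical (xL iA)} xr (fun i => xL i.1) xR) :=
  deq_restrictLeft_of_dominated (G := PGame.mk xl xr xL xR) fun i hi => by
    refine ⟨iB, hne, fun X hXs hXd => ?_⟩
    show outcome (xL i + X) ≤ outcome (xL iB + X)
    rw [outcome_add_eq_of_identical X (not_not.mp hi)]
    exact hAB X hXs hXd

end MisereDicot
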